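/- arXiv:0808.1217 — 2 statements merged into one kernel-verified Lean document; each statement's English description precedes it below -/
import Mathlib

section
/- Let M be a convex lattice polygon with exactly one interior lattice point O and dual polygon M* defined via primitive edge direction vectors based at O. Then O is the unique interior lattice point of M*, and the dual of M* (with respect to O) is the point reflection of M translated appropriately; in particular m** = m. -/
open Set MeasureTheory

/-- Embed an integer lattice point into the real plane. -/
def toR (p : ℤ × ℤ) : ℝ × ℝ := ((p.1 : ℝ), (p.2 : ℝ))

/-- Cross product (determinant) of two integer vectors. -/
def cross (u v : ℤ × ℤ) : ℤ := u.1 * v.2 - u.2 * v.1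

/-- The primitive vector in the direction of `v`. -/
def primitive (v : ℤ × ℤ) : ℤ × ℤ :=
  (v.1 / Int.gcd v.1 v.2, v.2 / Int.gcd v.1 v.2)

/-- The (closed) polygon determined by a cyclic list of lattice vertices. -/
def latticeHull {n : ℕ} (A : Fin n → ℤ × ℤ) : Set (ℝ × ℝ) :=
  convexHull ℝ (Set.range (toR ∘ A))

/-- Lattice points on the boundary of a plane set. -/
def bdryPts (S : Set (ℝ × ℝ)) : Set (ℤ × ℤ) := {p | toR p ∈ frontier S}

/-- Lattice points in the interior of a plane set. -/
def intPts (S : Set (ℝ × ℝ)) : Set (ℤ × ℤ) := {p | toR p ∈ interior S}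

/-- The closed triangle spanned by three lattice points. -/
def tri (a b c : ℤ × ℤ) : Set (ℝ × ℝ) := convexHull ℝ {toR a, toR b, toR c}

/-- An empty (primitive) lattice triangle: nondegenerate and containing no
lattice points other than its vertices. -/
def EmptyTri (a b c : ℤ × ℤ) : Prop :=
  cross (b - a) (c - a) ≠ 0 ∧
  ∀ p : ℤ × ℤ, toR p ∈ tri a b c → p = a ∨ p = b ∨ p = c

/-- The dual polygon: convex hull of `O + primitive(edge vector)`. -/
def dualHull {n : ℕ} [NeZero n] (A : Fin n → ℤ × ℤ) (O : ℤ × ℤ) : Set (ℝ × ℝ) :=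
  convexHull ℝ (Set.range fun i => toR (O + primitive (A (i + 1) - A i)))

/-- `A` lists in counterclockwise cyclic order the vertices of a (strictly) convex
lattice polygon. -/
def IsConvexPoly {n : ℕ} [NeZero n] (A : Fin n → ℤ × ℤ) : Prop :=
  Function.Injective A ∧
  (∀ i, 0 < cross (A (i + 1) - A i) (A (i + 2) - A (i + 1))) ∧
  (∀ i, segment ℝ (toR (A i)) (toR (A (i + 1))) ⊆ frontier (latticeHull A))

/-- `A` lists in counterclockwise cyclic order **all** boundary lattice points of a
convex lattice polygon (straight angles allowed). -/
def IsWeakConvexPoly {n : ℕ} [NeZero n] (A : Fin n → ℤ × ℤ) : Prop :=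
  Function.Injective A ∧
  (∀ i, 0 ≤ cross (A (i + 1) - A i) (A (i + 2) - A (i + 1))) ∧
  (∀ i, segment ℝ (toR (A i)) (toR (A (i + 1))) ⊆ frontier (latticeHull A)) ∧
  bdryPts (latticeHull A) = Set.range A

/-! ### Auxiliary machinery -/

/-- Real cross product. -/
def crR (u v : ℝ × ℝ) : ℝ := u.1 * v.2 - u.2 * v.1

lemma toR_add (a b : ℤ × ℤ) : toR (a + b) = toR a + toR b := by
  simp [toR, Prod.ext_iff]
lemma toR_sub (a b : ℤ × ℤ) : toR (a - b) = toR a - toR b := by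
  simp [toR, Prod.ext_iff]
lemma toR_smul (k : ℤ) (a : ℤ × ℤ) : toR (k • a) = (k : ℝ) • toR a := by
  simp [toR, Prod.ext_iff]
lemma toR_zero : toR 0 = 0 := by simp [toR, Prod.ext_iff]
lemma toR_inj : Function.Injective toR := by
  intro a b h
  simp only [toR, Prod.ext_iff] at h
  exact Prod.ext (by exact_mod_cast h.1) (by exact_mod_cast h.2)
lemma crR_toR (u v : ℤ × ℤ) : crR (toR u) (toR v) = (cross u v : ℝ) := by
  simp [crR, toR, cross]
lemma crR_toR_sub (w p q : ℤ × ℤ) :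
    crR (toR w) (toR p - toR q) = (cross w (p - q) : ℝ) := by
  rw [← toR_sub, crR_toR]

lemma cramer (u v w : ℤ × ℤ) :
    cross w v • u + cross u w • v = cross u v • w := by
  simp only [cross, Prod.ext_iff, Prod.fst_add, Prod.snd_add, Prod.smul_fst, Prod.smul_snd,
    smul_eq_mul]
  constructor <;> ring

lemma crR_cramer (u v w : ℝ × ℝ) :
    crR w v • u + crR u w • v = crR u v • w := by
  simp only [crR, Prod.ext_iff, Prod.fst_add, Prod.snd_add, Prod.smul_fst, Prod.smul_snd,
    smul_eq_mul]
  constructor <;> ring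

lemma gcd_dvd_cross (v w : ℤ × ℤ) : (Int.gcd w.1 w.2 : ℤ) ∣ cross v w :=
  dvd_sub (Dvd.dvd.mul_left (Int.gcd_dvd_right _ _) _) (Dvd.dvd.mul_left (Int.gcd_dvd_left _ _) _)

lemma primitive_spec {v : ℤ × ℤ} (hv : v ≠ 0) :
    0 < (Int.gcd v.1 v.2 : ℤ) ∧ (Int.gcd v.1 v.2 : ℤ) • primitive v = v ∧
      Int.gcd (primitive v).1 (primitive v).2 = 1 := by
  have h0 : Int.gcd v.1 v.2 ≠ 0 := by
    rw [Ne, Int.gcd_eq_zero_iff]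
    intro ⟨h1, h2⟩; exact hv (Prod.ext h1 h2)
  have hpos : 0 < (Int.gcd v.1 v.2 : ℤ) := by exact_mod_cast Nat.pos_of_ne_zero h0
  refine ⟨hpos, ?_, Int.gcd_div_gcd_div_gcd (by exact_mod_cast hpos)⟩
  have h1 : (Int.gcd v.1 v.2 : ℤ) * (v.1 / (Int.gcd v.1 v.2 : ℤ)) = v.1 :=
    Int.mul_ediv_cancel' (Int.gcd_dvd_left _ _)
  have h2 : (Int.gcd v.1 v.2 : ℤ) * (v.2 / (Int.gcd v.1 v.2 : ℤ)) = v.2 :=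
    Int.mul_ediv_cancel' (Int.gcd_dvd_right _ _)
  exact Prod.ext h1 h2

lemma primitive_unique {w v : ℤ × ℤ} {k : ℤ} (hk : 0 < k)
    (hw : Int.gcd w.1 w.2 = 1) (h : v = k • w) : primitive v = w := by
  subst h
  have hg : Int.gcd (k • w).1 (k • w).2 = k.natAbs := by
    simp only [Prod.smul_fst, Prod.smul_snd, smul_eq_mul, Int.gcd_mul_left, hw, mul_one]
  have hk' : ((Int.gcd (k • w).1 (k • w).2 : ℕ) : ℤ) = k := by
    rw [hg]; exact Int.natAbs_of_nonneg hk.le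
  unfold primitive
  rw [hk']
  simp only [Prod.smul_fst, Prod.smul_snd, smul_eq_mul]
  exact Prod.ext (Int.mul_ediv_cancel_left _ hk.ne') (Int.mul_ediv_cancel_left _ hk.ne')

lemma crR_combo (u a x y : ℝ × ℝ) {s t : ℝ} (h : s + t = 1) :
    crR u (s • x + t • y - a) = s * crR u (x - a) + t * crR u (y - a) := by
  have ht : t = 1 - s := by linarith
  subst ht
  simp [crR]; ring

lemma crR_linear (u : ℝ × ℝ) : IsLinearMap ℝ (fun x : ℝ × ℝ => crR u x) := by
  constructor
  · intro x y; simp [crR]; ring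
  · intro c x; simp [crR]; ring

lemma convex_halfplane (u a : ℝ × ℝ) : Convex ℝ {x | 0 ≤ crR u (x - a)} := by
  have : {x | 0 ≤ crR u (x - a)} = {x | crR u a ≤ crR u x} := by
    ext x; simp only [Set.mem_setOf_eq]
    constructor <;> intro h <;>
      · have hh : crR u (x - a) = crR u x - crR u a := by simp [crR]; ring
        first
        | (rw [hh] at h; linarith)
        | (rw [hh]; linarith)
  rw [this]
  exact convex_halfSpace_ge (crR_linear u) _

lemma hull_subset_halfplane {s : Set (ℝ × ℝ)} {u a : ℝ × ℝ}
    (h : ∀ x ∈ s, 0 ≤ crR u (x - a)) :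
    convexHull ℝ s ⊆ {x | 0 ≤ crR u (x - a)} :=
  convexHull_min h (convex_halfplane u a)

lemma interior_halfplane_strict {S : Set (ℝ × ℝ)} {u a : ℝ × ℝ} (hu : u ≠ 0)
    (h : S ⊆ {x | 0 ≤ crR u (x - a)}) {x : ℝ × ℝ} (hx : x ∈ interior S) :
    0 < crR u (x - a) := by
  have hxS : 0 ≤ crR u (x - a) := h (interior_subset hx)
  rcases eq_or_lt_of_le hxS with heq | h'
  · exfalso
    set w : ℝ × ℝ := (u.2, -u.1) with hw
    have hune : u.1 ≠ 0 ∨ u.2 ≠ 0 := by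
      by_contra hc; push_neg at hc; exact hu (Prod.ext hc.1 hc.2)
    have hwne : w ≠ 0 := by
      simp only [hw, Ne, Prod.ext_iff, Prod.fst_zero, Prod.snd_zero, neg_eq_zero, not_and]
      intro h1 h2
      exact hu (Prod.ext h2 h1)
    have hcw : crR u w = -(u.1 ^ 2 + u.2 ^ 2) := by simp [crR, hw]; ring
    have hcwneg : crR u w < 0 := by
      have h0 : 0 < u.1 ^ 2 + u.2 ^ 2 := by
        rcases hune with h1 | h2 <;> positivity
      rw [hcw]; linarith
    obtain ⟨ε, hε, hball⟩ := Metric.isOpen_iff.1 isOpen_interior x hx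
    set δ : ℝ := ε / (2 * ‖w‖) with hδ
    have hwnorm : 0 < ‖w‖ := norm_pos_iff.2 hwne
    have hδpos : 0 < δ := by positivity
    have hmem : x + δ • w ∈ S := by
      apply interior_subset; apply hball
      rw [Metric.mem_ball, dist_eq_norm]
      have : x + δ • w - x = δ • w := by abel
      rw [this, norm_smul, Real.norm_eq_abs, abs_of_pos hδpos, hδ]
      rw [div_mul_eq_mul_div, mul_comm]
      rw [div_lt_iff₀ (by positivity)]
      nlinarith
    have hge := h hmem
    have hval : crR u (x + δ • w - a) = crR u (x - a) + δ * crR u w := by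
      simp [crR]; ring
    rw [Set.mem_setOf_eq, hval, ← heq] at hge
    nlinarith
  · exact h'

lemma crR_eq_zero_collinear {v w : ℝ × ℝ} (hv : v ≠ 0) (h : crR v w = 0) :
    ∃ μ : ℝ, w = μ • v := by
  rcases (by
    by_contra hc
    push_neg at hc
    exact hv (Prod.ext hc.1 hc.2) : v.1 ≠ 0 ∨ v.2 ≠ 0) with h1 | h2
  · refine ⟨w.1 / v.1, ?_⟩
    have : w.2 = w.1 / v.1 * v.2 := by
      field_simp
      simp only [crR] at h
      linarith
    exact Prod.ext (by rw [Prod.smul_fst, smul_eq_mul, div_mul_cancel₀ _ h1]) (by rw [this]; rfl)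
  · refine ⟨w.2 / v.2, ?_⟩
    have : w.1 = w.2 / v.2 * v.1 := by
      field_simp
      simp only [crR] at h
      linarith
    exact Prod.ext (by rw [this]; rfl) (by rw [Prod.smul_snd, smul_eq_mul, div_mul_cancel₀ _ h2])

lemma frontier_segment_side {S : Set (ℝ × ℝ)} (hS : Convex ℝ S) {a b : ℝ × ℝ} (hab : a ≠ b)
    (hseg : segment ℝ a b ⊆ frontier S) {x : ℝ × ℝ} (hx : x ∈ interior S) :
    crR (b - a) (x - a) ≠ 0 := by
  intro h0
  have hba : b - a ≠ 0 := sub_ne_zero.2 (Ne.symm hab)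
  obtain ⟨μ, hμ⟩ := crR_eq_zero_collinear hba h0
  have hxa : x = a + μ • (b - a) := by rw [← hμ]; abel
  have hfr : ∀ z ∈ segment ℝ a b, z ∉ interior S := fun z hz hzint => (hseg hz).2 hzint
  have hacl : a ∈ closure S := (hseg (left_mem_segment ℝ a b)).1
  have hbcl : b ∈ closure S := (hseg (right_mem_segment ℝ a b)).1
  rcases le_or_gt μ 0 with hμ0 | hμpos
  · rcases eq_or_lt_of_le hμ0 with rfl | hμneg
    · exact hfr a (left_mem_segment ℝ a b) (by rwa [hxa, zero_smul, add_zero] at hx)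
    · have h1 : (1 : ℝ) - μ ≠ 0 := by intro h; rw [sub_eq_zero] at h; linarith
      have ha : a ∈ openSegment ℝ x b := by
        refine ⟨1 / (1 - μ), -μ / (1 - μ), by
          apply div_pos <;> linarith, by
          apply div_pos <;> linarith, by field_simp; ring, ?_⟩
        rw [hxa, Prod.ext_iff]
        simp only [Prod.fst_add, Prod.snd_add, Prod.smul_fst, Prod.smul_snd,
          Prod.fst_sub, Prod.snd_sub, smul_eq_mul]
        constructor <;> field_simp <;> ring
      exact hfr a (left_mem_segment ℝ a b)
        (hS.openSegment_interior_closure_subset_interior hx hbcl ha)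
  · rcases le_or_gt μ 1 with hμ1 | hμgt
    · have : x ∈ segment ℝ a b := by
        refine ⟨1 - μ, μ, by linarith, hμpos.le, by ring, ?_⟩
        rw [hxa, Prod.ext_iff]
        simp only [Prod.fst_add, Prod.snd_add, Prod.smul_fst, Prod.smul_snd,
          Prod.fst_sub, Prod.snd_sub, smul_eq_mul]
        constructor <;> ring
      exact hfr x this hx
    · have hμne : μ ≠ 0 := by linarith
      have hb : b ∈ openSegment ℝ x a := by
        refine ⟨1 / μ, 1 - 1 / μ, by positivity, ?_, by ring, ?_⟩
        · have : 1 / μ < 1 := by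
            rw [div_lt_one (by linarith)]; linarith
          linarith
        · rw [hxa, Prod.ext_iff]
          simp only [Prod.fst_add, Prod.snd_add, Prod.smul_fst, Prod.smul_snd,
            Prod.fst_sub, Prod.snd_sub, smul_eq_mul]
          constructor <;> field_simp <;> ring
      exact hfr b (right_mem_segment ℝ a b)
        (hS.openSegment_interior_closure_subset_interior hx hacl hb)

lemma mem_nonneg_side {S : Set (ℝ × ℝ)} (hS : Convex ℝ S) {a b : ℝ × ℝ} (hab : a ≠ b)
    (hseg : segment ℝ a b ⊆ frontier S) {x : ℝ × ℝ} (hx : x ∈ interior S)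
    (hpos : 0 < crR (b - a) (x - a)) {y : ℝ × ℝ} (hy : y ∈ S) :
    0 ≤ crR (b - a) (y - a) := by
  by_contra hneg
  push_neg at hneg
  set fx := crR (b - a) (x - a) with hfx
  set fy := crR (b - a) (y - a) with hfy
  set t : ℝ := fx / (fx - fy) with ht
  have hd : 0 < fx - fy := by linarith
  have ht0 : 0 < t := div_pos hpos hd
  have ht1 : t < 1 := by
    rw [ht, div_lt_one hd]; linarith
  have hz : (1 - t) • x + t • y ∈ interior S :=
    hS.combo_interior_closure_mem_interior hx (subset_closure hy) (by linarith) ht0.le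
      (by ring)
  have hzval : crR (b - a) ((1 - t) • x + t • y - a) = (1 - t) * fx + t * fy :=
    crR_combo _ _ _ _ (by ring)
  have hzero : (1 - t) * fx + t * fy = 0 := by
    rw [ht]; field_simp; ring
  exact frontier_segment_side hS hab hseg hz (by rw [hzval, hzero])

lemma crR_swap (a b x : ℝ × ℝ) : crR (a - b) (x - b) = - crR (b - a) (x - a) := by
  simp [crR]; ring

lemma mem_tri_of_coeffs (a b c : ℤ × ℤ) {s t : ℝ} (hs : 0 ≤ s) (ht : 0 ≤ t)
    (hst : s + t ≤ 1) :
    toR a + s • (toR b - toR a) + t • (toR c - toR a) ∈ tri a b c := by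
  have hK : Convex ℝ (tri a b c) := convex_convexHull ℝ _
  have hax : toR a ∈ tri a b c := subset_convexHull ℝ _ (by simp)
  have hbx : toR b ∈ tri a b c := subset_convexHull ℝ _ (by simp)
  have hcx : toR c ∈ tri a b c := subset_convexHull ℝ _ (by simp)
  rcases eq_or_lt_of_le (by linarith : (0:ℝ) ≤ s + t) with h0 | hσ
  · have hs0 : s = 0 := by linarith
    have ht0 : t = 0 := by linarith
    simpa [hs0, ht0] using hax
  · set σ := s + t with hσdef
    have hq : (s / σ) • toR b + (t / σ) • toR c ∈ tri a b c :=
      hK hbx hcx (by positivity) (by positivity) (by field_simp; linarith)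
    have hmem := hK hax hq (by linarith : (0:ℝ) ≤ 1 - σ) hσ.le (by ring)
    convert hmem using 1
    rw [smul_add, smul_smul, smul_smul]
    have h1 : σ * (s / σ) = s := by field_simp
    have h2 : σ * (t / σ) = t := by field_simp
    rw [h1, h2, hσdef]
    module

lemma tri_structure {a b c : ℤ × ℤ} {p : ℝ × ℝ} (hp : p ∈ tri a b c) :
    ∃ t : ℝ, 0 ≤ t ∧ t ≤ 1 ∧ ∃ q ∈ segment ℝ (toR b) (toR c),
      p = (1 - t) • toR a + t • q := by
  have htri : tri a b c = convexJoin ℝ {toR a} (convexHull ℝ ({toR b, toR c} : Set (ℝ × ℝ))) := by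
    unfold tri
    rw [convexHull_insert ⟨toR b, by simp⟩]
  rw [htri, mem_convexJoin] at hp
  obtain ⟨x, hx, q, hq, hpq⟩ := hp
  rw [Set.mem_singleton_iff] at hx
  subst hx
  rw [convexHull_pair] at hq
  obtain ⟨α, β, hα, hβ, hαβ, heq⟩ := hpq
  exact ⟨β, hβ, by linarith, q, hq, by rw [← heq]; congr 1; · congr 1; linarith⟩

lemma lattice_segment_prim {a u p : ℤ × ℤ} (hu : Int.gcd u.1 u.2 = 1)
    (hp : toR p ∈ segment ℝ (toR a) (toR (a + u))) : p = a ∨ p = a + u := by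
  obtain ⟨α, β, hα, hβ, hαβ, heq⟩ := hp
  obtain ⟨m, l, hml⟩ := (Int.isCoprime_iff_gcd_eq_one.2 hu)
  have hα' : α = 1 - β := by linarith
  have h1 : (p.1 : ℝ) = a.1 + β * u.1 := by
    have h := congrArg Prod.fst heq
    simp only [toR, Prod.fst_add, Prod.smul_fst, smul_eq_mul] at h
    push_cast at h
    rw [hα'] at h
    linear_combination -h
  have h2 : (p.2 : ℝ) = a.2 + β * u.2 := by
    have h := congrArg Prod.snd heq
    simp only [toR, Prod.snd_add, Prod.smul_snd, smul_eq_mul] at h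
    push_cast at h
    rw [hα'] at h
    linear_combination -h
  set K : ℤ := m * (p.1 - a.1) + l * (p.2 - a.2) with hK
  have hβK : β = (K : ℝ) := by
    have hh : (K : ℝ) = m * (β * u.1) + l * (β * u.2) := by
      push_cast [hK]
      rw [show ((p.1 : ℝ) - a.1) = β * u.1 by linarith,
          show ((p.2 : ℝ) - a.2) = β * u.2 by linarith]
    rw [hh]
    have hc : (m : ℝ) * u.1 + l * u.2 = 1 := by exact_mod_cast congrArg (Int.cast : ℤ → ℝ) hml
    nlinarith [hc]
  have hp1 : p.1 = a.1 + K * u.1 := by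
    have : (p.1 : ℝ) = a.1 + K * u.1 := by rw [h1, hβK]
    exact_mod_cast this
  have hp2 : p.2 = a.2 + K * u.2 := by
    have : (p.2 : ℝ) = a.2 + K * u.2 := by rw [h2, hβK]
    exact_mod_cast this
  have hK0 : 0 ≤ K := by exact_mod_cast hβK ▸ hβ
  have hK1 : K ≤ 1 := by
    have : (K : ℝ) ≤ 1 := by rw [← hβK]; linarith
    exact_mod_cast this
  interval_cases K
  · left; exact Prod.ext (by omega) (by omega)
  · right; exact Prod.ext (by simpa using hp1) (by simpa using hp2)

lemma empty_tri_coeffs {a b c : ℤ × ℤ} (h : EmptyTri a b c) {D s t : ℤ} (hD : 0 < D)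
    (hs : 0 ≤ s) (ht : 0 ≤ t) (hst : s + t ≤ D) {x : ℤ × ℤ}
    (hx : D • x = s • (b - a) + t • (c - a)) :
    (s = 0 ∧ t = 0) ∨ (s = D ∧ t = 0) ∨ (s = 0 ∧ t = D) := by
  set u := b - a with hu
  set v := c - a with hv
  set d := cross u v with hd
  have hdne : d ≠ 0 := h.1
  have hune : u ≠ 0 := by
    intro h0; apply hdne; rw [hd, h0]; simp [cross]
  have hvne : v ≠ 0 := by
    intro h0; apply hdne; rw [hd, h0]; simp [cross]
  have hx1 : (x.1 : ℝ) = (s / D) * u.1 + (t / D) * v.1 := by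
    have hc := congrArg (fun z : ℤ × ℤ => (z.1 : ℝ)) hx
    simp only [Prod.smul_fst, Prod.fst_add, smul_eq_mul] at hc
    push_cast at hc
    have hDne : (D : ℝ) ≠ 0 := by exact_mod_cast hD.ne'
    field_simp
    linarith
  have hx2 : (x.2 : ℝ) = (s / D) * u.2 + (t / D) * v.2 := by
    have hc := congrArg (fun z : ℤ × ℤ => (z.2 : ℝ)) hx
    simp only [Prod.smul_snd, Prod.snd_add, smul_eq_mul] at hc
    push_cast at hc
    have hDne : (D : ℝ) ≠ 0 := by exact_mod_cast hD.ne'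
    field_simp
    linarith
  have hDR : (0 : ℝ) < (D : ℝ) := by exact_mod_cast hD
  have hmem : toR (a + x) ∈ tri a b c := by
    have hcoe : toR (a + x) = toR a + ((s:ℝ) / D) • (toR b - toR a) +
        ((t:ℝ) / D) • (toR c - toR a) := by
      have hbu : toR b - toR a = toR u := by simp [toR, hu, Prod.ext_iff]
      have hcv : toR c - toR a = toR v := by simp [toR, hv, Prod.ext_iff]
      rw [hbu, hcv, Prod.ext_iff]
      simp only [toR, Prod.fst_add, Prod.snd_add, Prod.smul_fst, Prod.smul_snd, smul_eq_mul]
      push_cast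
      constructor
      · rw [hx1]; ring
      · rw [hx2]; ring
    rw [hcoe]
    apply mem_tri_of_coeffs _ _ _ (by positivity) (by positivity)
    rw [← add_div, div_le_one hDR]
    exact_mod_cast hst
  have comb_zero : ∀ s' t' : ℤ, s' • u + t' • v = 0 → s' = 0 ∧ t' = 0 := by
    intro s' t' hz
    have h1 : cross u (s' • u + t' • v) = t' * d := by
      simp only [cross, Prod.smul_fst, Prod.smul_snd, Prod.fst_add, Prod.snd_add,
        smul_eq_mul, hd]
      ring
    have h2 : cross (s' • u + t' • v) v = s' * d := by
      simp only [cross, Prod.smul_fst, Prod.smul_snd, Prod.fst_add, Prod.snd_add,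
        smul_eq_mul, hd]
      ring
    rw [hz] at h1 h2
    simp only [cross, Prod.fst_zero, Prod.snd_zero, zero_mul, mul_zero, sub_zero,
      zero_sub, sub_self] at h1 h2
    constructor
    · rcases mul_eq_zero.1 h2.symm with h' | h'
      · exact h'
      · exact absurd h' hdne
    · rcases mul_eq_zero.1 h1.symm with h' | h'
      · exact h'
      · exact absurd h' hdne
  rcases h.2 _ hmem with h0 | h0 | h0
  · left
    have hx0 : x = 0 := by
      have := congrArg (fun z => z - a) h0
      simpa using this
    rw [hx0, smul_zero] at hx
    exact comb_zero s t hx.symm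
  · right; left
    have hx0 : x = u := by
      have := congrArg (fun z => z - a) h0
      simpa [hu] using this
    rw [hx0] at hx
    have hz : (s - D) • u + t • v = 0 := by
      rw [sub_smul, hx]
      abel
    obtain ⟨h1, h2⟩ := comb_zero _ _ hz
    exact ⟨by linarith [sub_eq_zero.1 h1], h2⟩
  · right; right
    have hx0 : x = v := by
      have := congrArg (fun z => z - a) h0
      simpa [hv] using this
    rw [hx0] at hx
    have hz : s • u + (t - D) • v = 0 := by
      rw [sub_smul, hx]
      abel
    obtain ⟨h1, h2⟩ := comb_zero _ _ hz
    exact ⟨h1, by linarith [sub_eq_zero.1 h2]⟩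

lemma EmptyTri.cross_pm_one {a b c : ℤ × ℤ} (h : EmptyTri a b c) :
    cross (b - a) (c - a) = 1 ∨ cross (b - a) (c - a) = -1 := by
  set u := b - a with hu
  set v := c - a with hv
  set d := cross u v with hd
  by_contra hcon
  push_neg at hcon
  obtain ⟨hne1, hnem1⟩ := hcon
  have hdne : d ≠ 0 := h.1
  have h2 : 2 ≤ d.natAbs := by omega
  have hw : ∃ w : ℤ × ℤ, ¬ (d ∣ cross w v) ∨ ¬ (d ∣ cross u w) := by
    by_contra hall
    push_neg at hall
    have hv2 : d ∣ v.2 := by simpa [cross] using (hall (1, 0)).1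
    have hv1 : d ∣ v.1 := by
      have : d ∣ -v.1 := by simpa [cross] using (hall (0, 1)).1
      exact (dvd_neg).1 this
    have hu2 : d ∣ u.2 := by
      have : d ∣ -u.2 := by simpa [cross] using (hall (1, 0)).2
      exact (dvd_neg).1 this
    have hu1 : d ∣ u.1 := by simpa [cross] using (hall (0, 1)).2
    have hdd : d * d ∣ d := by
      have hA : d * d ∣ u.1 * v.2 := mul_dvd_mul hu1 hv2
      have hB : d * d ∣ u.2 * v.1 := mul_dvd_mul hu2 hv1
      have := dvd_sub hA hB
      rwa [hd, cross]
    have hnat : d.natAbs * d.natAbs ∣ d.natAbs := by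
      have := Int.natAbs_dvd_natAbs.2 hdd
      rwa [Int.natAbs_mul] at this
    have := Nat.le_of_dvd (by omega) hnat
    nlinarith
  obtain ⟨w, hwp⟩ := hw
  set D := (d.natAbs : ℤ) with hD
  have hDpos : 0 < D := by
    rw [hD]; exact_mod_cast Nat.pos_of_ne_zero (by omega)
  obtain ⟨ε, hε1, hεd⟩ : ∃ ε : ℤ, (ε = 1 ∨ ε = -1) ∧ D = ε * d := by
    rcases Int.natAbs_eq d with hh | hh
    · exact ⟨1, Or.inl rfl, by rw [one_mul, hD]; omega⟩
    · exact ⟨-1, Or.inr rfl, by rw [neg_one_mul, hD]; omega⟩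
  set α := ε * cross w v with hα
  set β := ε * cross u w with hβ
  have hkey : D • w = α • u + β • v := by
    have hcr := cramer u v w
    calc D • w = ε • (d • w) := by rw [smul_smul, ← hεd]
    _ = ε • (cross w v • u + cross u w • v) := by rw [← hd] at hcr; rw [hcr]
    _ = α • u + β • v := by rw [smul_add, smul_smul, smul_smul, hα, hβ]
  have hDd : ∀ x : ℤ, (D ∣ ε * x) ↔ d ∣ x := by
    intro x
    rcases hε1 with rfl | rfl
    · rw [one_mul, hD]; exact Int.natAbs_dvd
    · rw [neg_one_mul, dvd_neg, hD]; exact Int.natAbs_dvd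
  have hdvd : ¬ (D ∣ α) ∨ ¬ (D ∣ β) := by
    rcases hwp with hh | hh
    · left; rw [hα, hDd]; exact hh
    · right; rw [hβ, hDd]; exact hh
  set s := α % D with hsdef
  set t := β % D with htdef
  have hs0 : 0 ≤ s := Int.emod_nonneg _ hDpos.ne'
  have ht0 : 0 ≤ t := Int.emod_nonneg _ hDpos.ne'
  have hsD : s < D := Int.emod_lt_of_pos _ hDpos
  have htD : t < D := Int.emod_lt_of_pos _ hDpos
  set x := w - (α / D) • u - (β / D) • v with hxdef
  have hkey2 : D • x = s • u + t • v := by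
    have e1 : D * (α / D) + α % D = α := Int.mul_ediv_add_emod α D
    have e2 : D * (β / D) + β % D = β := Int.mul_ediv_add_emod β D
    rw [hxdef, smul_sub, smul_sub, smul_smul, smul_smul, hkey,
      show D * (α / D) = α - s by rw [hsdef]; linarith [e1],
      show D * (β / D) = β - t by rw [htdef]; linarith [e2],
      sub_smul, sub_smul]
    abel
  have hstne : ¬ (s = 0 ∧ t = 0) := by
    rintro ⟨hs, ht⟩
    rcases hdvd with hh | hh
    · exact hh (Int.dvd_of_emod_eq_zero hs)
    · exact hh (Int.dvd_of_emod_eq_zero ht)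
  rcases le_or_gt (s + t) D with hle | hgt
  · rcases empty_tri_coeffs h hDpos hs0 ht0 hle hkey2 with ⟨h1, h2⟩ | ⟨h1, h2⟩ | ⟨h1, h2⟩
    · exact hstne ⟨h1, h2⟩
    · omega
    · omega
  · have hkey3 : D • (u + v - x) = (D - s) • u + (D - t) • v := by
      rw [smul_sub, smul_add, hkey2, sub_smul, sub_smul]
      abel
    rcases empty_tri_coeffs h hDpos (by omega) (by omega) (by omega) hkey3 with
      ⟨h1, h2⟩ | ⟨h1, h2⟩ | ⟨h1, h2⟩ <;> omega

section MainAux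

variable {n : ℕ} [NeZero n]

lemma fin_add_one_ne (hn : 3 ≤ n) (i : Fin n) : i + 1 ≠ i := by
  intro h
  have h1 : (1 : Fin n) = 0 := by
    have h' : i + 1 = i + 0 := by rw [add_zero]; exact h
    exact add_left_cancel h'
  have hv : (1 : Fin n).val = (0 : Fin n).val := congrArg Fin.val h1
  rw [Fin.val_one', Fin.val_zero] at hv
  rw [Nat.mod_eq_of_lt (by omega)] at hv
  exact one_ne_zero hv

lemma fin_two_eq (i : Fin n) : i + 2 = i + 1 + 1 := by
  rw [add_assoc]; congr 1; ext; simp [Fin.val_add]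

lemma hO_interior {A : Fin n → ℤ × ℤ} {O : ℤ × ℤ}
    (hint : intPts (latticeHull A) = {O}) : toR O ∈ interior (latticeHull A) := by
  have : O ∈ intPts (latticeHull A) := by rw [hint]; exact rfl
  exact this

lemma edge_pos (hn : 3 ≤ n) {A : Fin n → ℤ × ℤ} {O : ℤ × ℤ}
    (hconv : IsConvexPoly A) (hint : intPts (latticeHull A) = {O}) (i : Fin n) :
    0 < cross (A (i + 1) - A i) (O - A i) := by
  obtain ⟨hinj, hcr, hfr⟩ := hconv
  set a := toR (A i) with ha
  set b := toR (A (i + 1)) with hb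
  have hba : b - a = toR (A (i + 1) - A i) := (toR_sub _ _).symm
  have hab : a ≠ b := fun h => fin_add_one_ne hn i (hinj (toR_inj h.symm))
  have hO := hO_interior hint
  have hSc : Convex ℝ (latticeHull A) := convex_convexHull ℝ _
  have hne := frontier_segment_side hSc hab (hfr i) hO
  have hval : crR (b - a) (toR O - a) = (cross (A (i + 1) - A i) (O - A i) : ℝ) := by
    rw [hba, ha, crR_toR_sub]
  rcases lt_trichotomy (crR (b - a) (toR O - a)) 0 with hlt | heq | hgt
  · exfalso
    have hswap : segment ℝ b a ⊆ frontier (latticeHull A) := by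
      rw [segment_symm]; exact hfr i
    have hpos' : 0 < crR (a - b) (toR O - b) := by rw [crR_swap]; linarith
    have hyS : toR (A (i + 2)) ∈ latticeHull A := subset_convexHull ℝ _ ⟨i + 2, rfl⟩
    have hle := mem_nonneg_side hSc (Ne.symm hab) hswap hO hpos' hyS
    rw [crR_swap] at hle
    have hv2 : crR (b - a) (toR (A (i + 2)) - a) =
        (cross (A (i + 1) - A i) (A (i + 2) - A i) : ℝ) := by
      rw [hba, ha, crR_toR_sub]
    have hgt2 : 0 < cross (A (i + 1) - A i) (A (i + 2) - A i) := by
      have h := hcr i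
      have heq2 : cross (A (i + 1) - A i) (A (i + 2) - A i)
           = cross (A (i + 1) - A i) (A (i + 2) - A (i + 1)) := by
        simp only [cross, Prod.fst_sub, Prod.snd_sub]; ring
      rw [heq2]; exact h
    rw [hv2] at hle
    have : (0 : ℝ) < (cross (A (i + 1) - A i) (A (i + 2) - A i) : ℝ) := by exact_mod_cast hgt2
    linarith
  · exact absurd heq hne
  · rw [hval] at hgt; exact_mod_cast hgt

lemma vertex_nonneg (hn : 3 ≤ n) {A : Fin n → ℤ × ℤ} {O : ℤ × ℤ}
    (hconv : IsConvexPoly A) (hint : intPts (latticeHull A) = {O}) (i m : Fin n) :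
    0 ≤ cross (A (i + 1) - A i) (A m - A i) := by
  have hpos := edge_pos hn hconv hint i
  obtain ⟨hinj, hcr, hfr⟩ := hconv
  set a := toR (A i) with ha
  set b := toR (A (i + 1)) with hb
  have hba : b - a = toR (A (i + 1) - A i) := (toR_sub _ _).symm
  have hab : a ≠ b := fun h => fin_add_one_ne hn i (hinj (toR_inj h.symm))
  have hO := hO_interior hint
  have hSc : Convex ℝ (latticeHull A) := convex_convexHull ℝ _
  have hposR : 0 < crR (b - a) (toR O - a) := by
    rw [hba, ha, crR_toR_sub]
    exact_mod_cast hpos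
  have hyS : toR (A m) ∈ latticeHull A := subset_convexHull ℝ _ ⟨m, rfl⟩
  have hle := mem_nonneg_side hSc hab (hfr i) hO hposR hyS
  rw [hba, ha, crR_toR_sub] at hle
  exact_mod_cast hle

lemma cross_smul_left (k : ℤ) (u v : ℤ × ℤ) : cross (k • u) v = k * cross u v := by
  simp only [cross, Prod.smul_fst, Prod.smul_snd, smul_eq_mul]; ring

lemma dist_one_lat (hn : 3 ≤ n) {A : Fin n → ℤ × ℤ} {O : ℤ × ℤ}
    (hconv : IsConvexPoly A) (hint : intPts (latticeHull A) = {O}) (i : Fin n) :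
    cross (primitive (A (i + 1) - A i)) (O - A i) = 1 := by
  have hpos := edge_pos hn hconv hint i
  obtain ⟨hinj, hcr, hfr⟩ := hconv
  have hO := hO_interior hint
  have hSc : Convex ℝ (latticeHull A) := convex_convexHull ℝ _
  have hene : A (i + 1) - A i ≠ 0 := by
    intro h
    exact fin_add_one_ne hn i (hinj (sub_eq_zero.1 h))
  obtain ⟨hg, hgu, hu1⟩ := primitive_spec hene
  set u := primitive (A (i + 1) - A i) with hu
  set g : ℤ := (Int.gcd (A (i + 1) - A i).1 (A (i + 1) - A i).2 : ℤ) with hgdef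
  set c := cross u (O - A i) with hc
  have hgc : g * c = cross (A (i + 1) - A i) (O - A i) := by
    rw [hc, ← cross_smul_left, hgu]
  have hcpos : 0 < c := by nlinarith
  -- the triangle (O, A i, A i + u) is empty
  have hAi1 : A i + g • u = A (i + 1) := by
    rw [hgu]; abel
  have hgR : (1 : ℝ) ≤ (g : ℝ) := by exact_mod_cast hg
  have hSAi : toR (A i) ∈ latticeHull A := subset_convexHull ℝ _ ⟨i, rfl⟩
  have hSAi1 : toR (A (i + 1)) ∈ latticeHull A := subset_convexHull ℝ _ ⟨i + 1, rfl⟩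
  have hAiu_seg : toR (A i + u) ∈ segment ℝ (toR (A i)) (toR (A (i + 1))) := by
    refine ⟨1 - 1 / (g : ℝ), 1 / (g : ℝ), by
      have : 1 / (g : ℝ) ≤ 1 := by rw [div_le_one (by linarith)]; linarith
      linarith, by positivity, by ring, ?_⟩
    rw [← hAi1, Prod.ext_iff]
    simp only [toR, toR_add, toR_smul, Prod.fst_add, Prod.snd_add, Prod.smul_fst,
      Prod.smul_snd, smul_eq_mul]
    push_cast
    constructor <;> (field_simp; ring)
  have hSAiu : toR (A i + u) ∈ latticeHull A :=
    hSc.segment_subset hSAi hSAi1 hAiu_seg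
  have hempty : EmptyTri O (A i) (A i + u) := by
    constructor
    · have hident : cross (A i - O) (A i + u - O) = c := by
        rw [hc]
        simp only [cross, Prod.fst_sub, Prod.snd_sub, Prod.fst_add, Prod.snd_add]
        ring
      rw [hident]
      exact hcpos.ne'
    · intro p hp
      obtain ⟨t, ht0, ht1, q, hq, hpeq⟩ := tri_structure hp
      have hqS : q ∈ latticeHull A :=
        hSc.segment_subset hSAi hSAiu hq
      rcases eq_or_lt_of_le ht1 with rfl | ht1'
      · right
        have hpq : toR p = q := by rw [hpeq]; simp
        exact lattice_segment_prim hu1 (hpq ▸ hq)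
      · left
        rcases eq_or_lt_of_le ht0 with rfl | ht0'
        · apply toR_inj
          rw [hpeq]; simp
        · have hpint : toR p ∈ interior (latticeHull A) := by
            rw [hpeq]
            exact hSc.combo_interior_closure_mem_interior hO (subset_closure hqS)
              (by linarith) ht0 (by ring)
          have : p ∈ intPts (latticeHull A) := hpint
          rw [hint] at this
          exact this
  have := hempty.cross_pm_one
  have hident : cross (A i - O) (A i + u - O) = c := by
    rw [hc]
    simp only [cross, Prod.fst_sub, Prod.snd_sub, Prod.fst_add, Prod.snd_add]
    ring
  rw [hident] at this
  rcases this with h1 | h1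
  · rw [hc] at h1; exact h1
  · omega

end MainAux

section MainAux2
set_option linter.unusedSectionVars false

variable {n : ℕ} [NeZero n]

lemma cross_split_base (w x y z : ℤ × ℤ) :
    cross w (x - y) = cross w (x - z) - cross w (y - z) := by
  simp only [cross, Prod.fst_sub, Prod.snd_sub]; ring

lemma cross_smul_self (k : ℤ) (u : ℤ × ℤ) : cross u (k • u) = 0 := by
  simp only [cross, Prod.smul_fst, Prod.smul_snd, smul_eq_mul]; ring

lemma prim_O_sub (hn : 3 ≤ n) {A : Fin n → ℤ × ℤ} {O : ℤ × ℤ}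
    (hconv : IsConvexPoly A) (hint : intPts (latticeHull A) = {O}) (i : Fin n) :
    Int.gcd (O - A i).1 (O - A i).2 = 1 := by
  have h1 := dist_one_lat hn hconv hint i
  have hdvd := gcd_dvd_cross (primitive (A (i + 1) - A i)) (O - A i)
  rw [h1] at hdvd
  have h2 : (Int.gcd (O - A i).1 (O - A i).2 : ℤ) = 1 := Int.eq_one_of_dvd_one (by positivity) hdvd
  exact_mod_cast h2

lemma edge_ne (hn : 3 ≤ n) {A : Fin n → ℤ × ℤ} (hinj : Function.Injective A) (i : Fin n) :
    A (i + 1) - A i ≠ 0 := by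
  intro h
  exact fin_add_one_ne hn i (hinj (sub_eq_zero.1 h))

lemma cross_prim_pos (hn : 3 ≤ n) {A : Fin n → ℤ × ℤ}
    (hconv : IsConvexPoly A) (i : Fin n) :
    0 < cross (primitive (A (i + 1) - A i)) (primitive (A (i + 1 + 1) - A (i + 1))) := by
  obtain ⟨hinj, hcr, hfr⟩ := hconv
  obtain ⟨hg, hgu, hu1⟩ := primitive_spec (edge_ne hn hinj i)
  obtain ⟨hg', hgu', hu1'⟩ := primitive_spec (edge_ne hn hinj (i + 1))
  have h := hcr i
  rw [fin_two_eq] at h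
  rw [← hgu, ← hgu', cross_smul_left] at h
  have h2 : cross (primitive (A (i + 1) - A i)) ((Int.gcd (A (i+1+1) - A (i+1)).1
      (A (i+1+1) - A (i+1)).2 : ℤ) • primitive (A (i + 1 + 1) - A (i + 1)))
      = (Int.gcd (A (i+1+1) - A (i+1)).1 (A (i+1+1) - A (i+1)).2 : ℤ) *
        cross (primitive (A (i + 1) - A i)) (primitive (A (i + 1 + 1) - A (i + 1))) := by
    simp only [cross, Prod.smul_fst, Prod.smul_snd, smul_eq_mul]; ring
  rw [h2] at h
  by_contra hc
  push_neg at hc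
  have hle : (Int.gcd (A (i+1+1) - A (i+1)).1 (A (i+1+1) - A (i+1)).2 : ℤ) *
      cross (primitive (A (i + 1) - A i)) (primitive (A (i + 1 + 1) - A (i + 1))) ≤ 0 :=
    mul_nonpos_iff.2 (Or.inl ⟨hg'.le, hc⟩)
  nlinarith

lemma cross_u_O_next (hn : 3 ≤ n) {A : Fin n → ℤ × ℤ} {O : ℤ × ℤ}
    (hconv : IsConvexPoly A) (hint : intPts (latticeHull A) = {O}) (i : Fin n) :
    cross (primitive (A (i + 1) - A i)) (O - A (i + 1)) = 1 := by
  obtain ⟨hg, hgu, hu1⟩ := primitive_spec (edge_ne hn hconv.1 i)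
  have h1 := dist_one_lat hn hconv hint i
  set u := primitive (A (i + 1) - A i) with hu
  have hsplit : cross u (O - A (i + 1)) =
      cross u (O - A i) - cross u (A (i + 1) - A i) := by
    exact cross_split_base u O (A (i + 1)) (A i)
  have hzero : cross u (A (i + 1) - A i) = 0 := by
    rw [← hgu, cross_smul_self]
  rw [hsplit, hzero, h1, sub_zero]

lemma dual_edge (hn : 3 ≤ n) {A : Fin n → ℤ × ℤ} {O : ℤ × ℤ}
    (hconv : IsConvexPoly A) (hint : intPts (latticeHull A) = {O}) (i : Fin n) :
    primitive (A (i + 1 + 1) - A (i + 1)) - primitive (A (i + 1) - A i) =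
      (cross (primitive (A (i + 1) - A i)) (primitive (A (i + 1 + 1) - A (i + 1)))) •
        (O - A (i + 1)) ∧
    primitive (primitive (A (i + 1 + 1) - A (i + 1)) - primitive (A (i + 1) - A i)) =
      O - A (i + 1) := by
  set u := primitive (A (i + 1) - A i) with hu
  set u' := primitive (A (i + 1 + 1) - A (i + 1)) with hu'
  set P := O - A (i + 1) with hP
  have hcra := cramer u P u'
  have h1 : cross u P = 1 := cross_u_O_next hn hconv hint i
  have h2 : cross u' P = 1 := dist_one_lat hn hconv hint (i + 1)
  rw [h1, h2, one_smul, one_smul] at hcra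
  have hvec : u' - u = (cross u u') • P := by
    conv_lhs => rw [← hcra]
    abel
  refine ⟨hvec, ?_⟩
  exact primitive_unique (cross_prim_pos hn hconv i) (prim_O_sub hn hconv hint (i + 1)) hvec

end MainAux2

/-- The point reflection `x ↦ c - x` as an affine map. -/
noncomputable def reflMap (c : ℝ × ℝ) : (ℝ × ℝ) →ᵃ[ℝ] (ℝ × ℝ) where
  toFun := fun x => c - x
  linear := -LinearMap.id
  map_vadd' := by
    intro p v
    simp only [vadd_eq_add, LinearMap.neg_apply, LinearMap.id_apply]
    abel

section MainAux3
set_option linter.unusedSectionVars false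

variable {n : ℕ} [NeZero n]

lemma conj2 (hn : 3 ≤ n) {A : Fin n → ℤ × ℤ} {O : ℤ × ℤ}
    (hconv : IsConvexPoly A) (hint : intPts (latticeHull A) = {O}) :
    dualHull (fun i : Fin n => O + primitive (A (i + 1) - A i)) O =
      (fun x : ℝ × ℝ => toR (O + O) - x) '' latticeHull A := by
  set B := fun i : Fin n => O + primitive (A (i + 1) - A i) with hB
  have hBfun : (fun i : Fin n => toR (O + primitive (B (i + 1) - B i))) =
      fun i : Fin n => toR (O + O) - toR (A (i + 1)) := by
    funext i
    have hsub : B (i + 1) - B i = primitive (A (i + 1 + 1) - A (i + 1)) -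
        primitive (A (i + 1) - A i) := by
      rw [hB]
      dsimp only
      abel
    rw [hsub, (dual_edge hn hconv hint i).2,
      show O + (O - A (i + 1)) = (O + O) - A (i + 1) by abel, toR_sub]
  have hsurj : Function.Surjective (fun i : Fin n => i + 1) :=
    fun j => ⟨j - 1, sub_add_cancel j 1⟩
  have hcomp : (fun i : Fin n => toR (O + O) - toR (A (i + 1))) =
      ((fun x : ℝ × ℝ => toR (O + O) - x) ∘ (toR ∘ A)) ∘ (fun i : Fin n => i + 1) := rfl
  unfold dualHull
  rw [hBfun, hcomp, hsurj.range_comp, Set.range_comp]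
  have : (fun x : ℝ × ℝ => toR (O + O) - x) = ⇑(reflMap (toR (O + O))) := rfl
  rw [this, ← AffineMap.image_convexHull]
  rfl

end MainAux3

/-- Dual vertex direction. -/
def uvec {n : ℕ} [NeZero n] (A : Fin n → ℤ × ℤ) (i : Fin n) : ℤ × ℤ :=
  primitive (A (i + 1) - A i)

/-- Dual vertices. -/
def Bv {n : ℕ} [NeZero n] (A : Fin n → ℤ × ℤ) (O : ℤ × ℤ) (i : Fin n) : ℤ × ℤ :=
  O + uvec A i

lemma toR_ne_zero {x : ℤ × ℤ} (h : x ≠ 0) : toR x ≠ 0 :=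
  fun hh => h (toR_inj (by rw [hh, toR_zero]))

lemma span_top_of_crR {p q r : ℝ × ℝ} (h : crR (q - p) (r - p) ≠ 0) :
    affineSpan ℝ ({p, q, r} : Set (ℝ × ℝ)) = ⊤ := by
  rw [AffineSubspace.affineSpan_eq_top_iff_vectorSpan_eq_top_of_nonempty ℝ (ℝ × ℝ) (ℝ × ℝ) ⟨p, by simp⟩]
  rw [Submodule.eq_top_iff']
  intro x
  have hq : q - p ∈ vectorSpan ℝ ({p, q, r} : Set (ℝ × ℝ)) :=
    vsub_mem_vectorSpan ℝ (by simp) (by simp)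
  have hr : r - p ∈ vectorSpan ℝ ({p, q, r} : Set (ℝ × ℝ)) :=
    vsub_mem_vectorSpan ℝ (by simp) (by simp)
  have hid := crR_cramer (q - p) (r - p) x
  have hx : x = (crR (q - p) (r - p))⁻¹ •
      (crR x (r - p) • (q - p) + crR (q - p) x • (r - p)) := by
    rw [hid, smul_smul, inv_mul_cancel₀ h, one_smul]
  rw [hx]
  exact Submodule.smul_mem _ _
    (Submodule.add_mem _ (Submodule.smul_mem _ _ hq) (Submodule.smul_mem _ _ hr))

section MainAux4
set_option linter.unusedSectionVars false

variable {n : ℕ} [NeZero n]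

lemma dualHull_eq (A : Fin n → ℤ × ℤ) (O : ℤ × ℤ) :
    dualHull A O = convexHull ℝ (Set.range (toR ∘ Bv A O)) := rfl

lemma Bv_sub (A : Fin n → ℤ × ℤ) (O : ℤ × ℤ) (j k : Fin n) :
    Bv A O k - Bv A O j = uvec A k - uvec A j := by
  unfold Bv
  abel

lemma Bv_edge (hn : 3 ≤ n) {A : Fin n → ℤ × ℤ} {O : ℤ × ℤ}
    (hconv : IsConvexPoly A) (hint : intPts (latticeHull A) = {O}) (j : Fin n) :
    Bv A O (j + 1) - Bv A O j =
      (cross (uvec A j) (uvec A (j + 1))) • (O - A (j + 1)) := by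
  rw [Bv_sub]
  exact (dual_edge hn hconv hint j).1

lemma cross_smul_right' (k : ℤ) (u v : ℤ × ℤ) : cross u (k • v) = k * cross u v := by
  simp only [cross, Prod.smul_fst, Prod.smul_snd, smul_eq_mul]; ring

lemma cross_anti (u v : ℤ × ℤ) : cross u v = - cross v u := by
  simp only [cross]; ring

lemma cross_uvec_O_next (hn : 3 ≤ n) {A : Fin n → ℤ × ℤ} {O : ℤ × ℤ}
    (hconv : IsConvexPoly A) (hint : intPts (latticeHull A) = {O}) (j : Fin n) :
    cross (uvec A j) (O - A (j + 1)) = 1 :=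
  cross_u_O_next hn hconv hint j

lemma dist_one_uvec (hn : 3 ≤ n) {A : Fin n → ℤ × ℤ} {O : ℤ × ℤ}
    (hconv : IsConvexPoly A) (hint : intPts (latticeHull A) = {O}) (i : Fin n) :
    cross (uvec A i) (O - A i) = 1 :=
  dist_one_lat hn hconv hint i

lemma cross_uvec_pos (hn : 3 ≤ n) {A : Fin n → ℤ × ℤ}
    (hconv : IsConvexPoly A) (i : Fin n) :
    0 < cross (uvec A i) (uvec A (i + 1)) :=
  cross_prim_pos hn hconv i

lemma dual_subset_O (hn : 3 ≤ n) {A : Fin n → ℤ × ℤ} {O : ℤ × ℤ}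
    (hconv : IsConvexPoly A) (hint : intPts (latticeHull A) = {O}) {p : ℤ × ℤ}
    (hp : toR p ∈ interior (dualHull A O)) : p = O := by
  have hinj := hconv.1
  have hQ : ∀ j : Fin n, 0 ≤ cross (p - O) (A (j + 1) - O) := by
    intro j
    have hlpos := cross_uvec_pos hn hconv j
    have hd := Bv_edge hn hconv hint j
    have hdne : Bv A O (j + 1) - Bv A O j ≠ 0 := by
      intro h0
      have hc : cross (uvec A j) (Bv A O (j + 1) - Bv A O j) =
          cross (uvec A j) (uvec A (j + 1)) := by
        rw [hd, cross_smul_right', cross_uvec_O_next hn hconv hint j, mul_one]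
      rw [h0] at hc
      simp only [cross, Prod.fst_zero, Prod.snd_zero, mul_zero, sub_self] at hc
      exact absurd hc.symm hlpos.ne'
    have hhalf : ∀ x ∈ Set.range (toR ∘ Bv A O),
        0 ≤ crR (toR (Bv A O (j + 1) - Bv A O j)) (x - toR (Bv A O j)) := by
      rintro x ⟨k, rfl⟩
      rw [Function.comp_apply, crR_toR_sub]
      have hZ : 0 ≤ cross (Bv A O (j + 1) - Bv A O j) (Bv A O k - Bv A O j) := by
        rw [hd, Bv_sub, cross_smul_left]
        apply mul_nonneg hlpos.le
        have e1 : cross (O - A (j + 1)) (uvec A k - uvec A j)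
            = cross (uvec A j) (O - A (j + 1)) - cross (uvec A k) (O - A (j + 1)) := by
          simp only [cross, Prod.fst_sub, Prod.snd_sub]; ring
        rw [e1, cross_uvec_O_next hn hconv hint j,
          cross_split_base (uvec A k) O (A (j + 1)) (A k), dist_one_uvec hn hconv hint k]
        have hnn : 0 ≤ cross (uvec A k) (A (j + 1) - A k) := by
          obtain ⟨hg, hgu, _⟩ := primitive_spec (edge_ne hn hinj k)
          have hvn := vertex_nonneg hn hconv hint k (j + 1)
          rw [← hgu, cross_smul_left] at hvn
          have hvn' : 0 ≤ ((Int.gcd (A (k + 1) - A k).1 (A (k + 1) - A k).2 : ℤ)) *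
              cross (uvec A k) (A (j + 1) - A k) := hvn
          nlinarith
        linarith
      exact_mod_cast hZ
    have hsub := hull_subset_halfplane hhalf
    rw [← dualHull_eq] at hsub
    have hstrict := interior_halfplane_strict (toR_ne_zero hdne) hsub hp
    rw [crR_toR_sub] at hstrict
    have hge1 : 1 ≤ cross (Bv A O (j + 1) - Bv A O j) (p - Bv A O j) := by
      exact_mod_cast hstrict
    have hcomp : cross (Bv A O (j + 1) - Bv A O j) (p - Bv A O j)
        = cross (uvec A j) (uvec A (j + 1)) * (cross (O - A (j + 1)) (p - O) + 1) := by
      rw [hd, cross_smul_left]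
      congr 1
      have hsplit : p - Bv A O j = (p - O) - uvec A j := by
        unfold Bv; abel
      rw [hsplit,
        show cross (O - A (j + 1)) ((p - O) - uvec A j) =
          cross (O - A (j + 1)) (p - O) - cross (O - A (j + 1)) (uvec A j) from by
            simp only [cross, Prod.fst_sub, Prod.snd_sub]; ring]
      have hm1 : cross (O - A (j + 1)) (uvec A j) = -1 := by
        rw [cross_anti, cross_uvec_O_next hn hconv hint j]
      rw [hm1]; ring
    rw [hcomp] at hge1
    have hX : 0 ≤ cross (O - A (j + 1)) (p - O) := by nlinarith
    have hflip : cross (p - O) (A (j + 1) - O) = cross (O - A (j + 1)) (p - O) := by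
      simp only [cross, Prod.fst_sub, Prod.snd_sub]; ring
    rw [hflip]
    exact hX
  by_contra hpO
  have hy : p - O ≠ 0 := sub_ne_zero.2 hpO
  have hyR : toR (p - O) ≠ 0 := toR_ne_zero hy
  have hhalf2 : ∀ x ∈ Set.range (toR ∘ A), 0 ≤ crR (toR (p - O)) (x - toR O) := by
    rintro x ⟨m, rfl⟩
    rw [Function.comp_apply, crR_toR_sub]
    obtain ⟨j, hj⟩ : ∃ j : Fin n, j + 1 = m := ⟨m - 1, sub_add_cancel m 1⟩
    have hq := hQ j
    rw [hj] at hq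
    exact_mod_cast hq
  have hcontra := interior_halfplane_strict hyR (hull_subset_halfplane hhalf2)
    (hO_interior hint)
  rw [sub_self] at hcontra
  simp only [crR, Prod.fst_zero, Prod.snd_zero, mul_zero, sub_self, lt_self_iff_false]
    at hcontra

end MainAux4

section MainAux5
set_option linter.unusedSectionVars false

variable {n : ℕ} [NeZero n]

lemma O_mem_interior_dual (hn : 3 ≤ n) {A : Fin n → ℤ × ℤ} {O : ℤ × ℤ}
    (hconv : IsConvexPoly A) (hint : intPts (latticeHull A) = {O}) :
    toR O ∈ interior (dualHull A O) := by
  have hinj := hconv.1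
  by_contra hOC
  set C := dualHull A O with hC
  have hCconv : Convex ℝ C := convex_convexHull ℝ _
  -- the interior of C is nonempty
  have hCne : (interior C).Nonempty := by
    have hd0 := Bv_edge hn hconv hint 0
    have hd1 := Bv_edge hn hconv hint 1
    have hkey : 0 < cross (Bv A O (0 + 1) - Bv A O 0) (Bv A O (1 + 1) - Bv A O 1) := by
      rw [hd0, hd1, cross_smul_left, cross_smul_right']
      have hOO : cross (O - A (0 + 1)) (O - A (1 + 1)) =
          cross (A (0 + 1 + 1) - A (0 + 1)) (O - A (0 + 1)) := by
        have h11 : (1 : Fin n) + 1 = 0 + 1 + 1 := by rw [zero_add]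
        rw [h11]
        simp only [cross, Prod.fst_sub, Prod.snd_sub]; ring
      rw [hOO]
      obtain ⟨hg, hgu, _⟩ := primitive_spec (edge_ne hn hinj (0 + 1))
      rw [← hgu, cross_smul_left]
      have hone := dist_one_uvec hn hconv hint (0 + 1)
      have : cross (primitive (A (0 + 1 + 1) - A (0 + 1))) (O - A (0 + 1)) = 1 := hone
      rw [this, mul_one]
      have hl0 := cross_uvec_pos hn hconv 0
      have hl1 := cross_uvec_pos hn hconv 1
      positivity
    have hsp : affineSpan ℝ ({toR (Bv A O 0), toR (Bv A O (0 + 1)),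
        toR (Bv A O (1 + 1))} : Set (ℝ × ℝ)) = ⊤ := by
      apply span_top_of_crR
      have hrw : crR (toR (Bv A O (0 + 1)) - toR (Bv A O 0))
          (toR (Bv A O (1 + 1)) - toR (Bv A O 0)) =
          (cross (Bv A O (0 + 1) - Bv A O 0) (Bv A O (1 + 1) - Bv A O 0) : ℝ) := by
        rw [← toR_sub, ← toR_sub, crR_toR]
      rw [hrw]
      have hsplit : cross (Bv A O (0 + 1) - Bv A O 0) (Bv A O (1 + 1) - Bv A O 0) =
          cross (Bv A O (0 + 1) - Bv A O 0) (Bv A O (1 + 1) - Bv A O 1) +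
          cross (Bv A O (0 + 1) - Bv A O 0) (Bv A O 1 - Bv A O 0) := by
        simp only [cross, Prod.fst_sub, Prod.snd_sub]; ring
      have h01 : (0 : Fin n) + 1 = 1 := zero_add 1
      have hself : cross (Bv A O (0 + 1) - Bv A O 0) (Bv A O 1 - Bv A O 0) = 0 := by
        rw [h01]
        simp only [cross, Prod.fst_sub, Prod.snd_sub]; ring
      have : (0 : ℤ) < cross (Bv A O (0 + 1) - Bv A O 0) (Bv A O (1 + 1) - Bv A O 0) := by
        rw [hsplit, hself, add_zero]
        exact hkey
      exact_mod_cast this.ne'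
    have htop : affineSpan ℝ (Set.range (toR ∘ Bv A O)) = ⊤ := by
      apply eq_top_iff.2
      rw [← hsp]
      apply affineSpan_mono
      rintro x (rfl | rfl | rfl)
      · exact ⟨0, rfl⟩
      · exact ⟨0 + 1, rfl⟩
      · exact ⟨1 + 1, rfl⟩
    rw [hC, dualHull_eq]
    exact interior_convexHull_nonempty_iff_affineSpan_eq_top.2 htop
  obtain ⟨x₀, hx₀⟩ := hCne
  obtain ⟨f, hf⟩ := geometric_hahn_banach_open_point hCconv.interior isOpen_interior hOC
  set c₀ := f (toR O) with hc₀
  have hfle : ∀ y ∈ C, f y ≤ c₀ := by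
    intro y hy
    by_contra hgt
    push_neg at hgt
    have hx₀lt : f x₀ < c₀ := hf _ hx₀
    have h1 : 0 < f y - f x₀ := by linarith
    set tt := (c₀ - f x₀) / (f y - f x₀) with htt
    have ht0 : 0 < tt := div_pos (by linarith) h1
    have ht1 : tt < 1 := by rw [htt, div_lt_one h1]; linarith
    have hz : (1 - tt) • x₀ + tt • y ∈ interior C :=
      hCconv.combo_interior_closure_mem_interior hx₀ (subset_closure hy)
        (by linarith) ht0.le (by ring)
    have hzlt := hf _ hz
    rw [map_add, _root_.map_smul, _root_.map_smul] at hzlt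
    simp only [smul_eq_mul] at hzlt
    have hzval : (1 - tt) * f x₀ + tt * f y = c₀ := by
      rw [htt]; field_simp; ring
    linarith
  have hw : ∀ i, f (toR (Bv A O i)) ≤ c₀ := fun i =>
    hfle _ (subset_convexHull ℝ _ ⟨i, rfl⟩)
  have hsumE : ∑ i : Fin n, (A (i + 1) - A i) = 0 := by
    rw [Finset.sum_sub_distrib, sub_eq_zero]
    exact Fintype.sum_equiv (Equiv.addRight 1) _ _ (fun i => rfl)
  set gg : Fin n → ℤ := fun i => (Int.gcd (A (i + 1) - A i).1 (A (i + 1) - A i).2 : ℤ)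
    with hgg
  have hggpos : ∀ i, 0 < gg i := fun i => (primitive_spec (edge_ne hn hinj i)).1
  have hKZ : (∑ i, gg i) • O = ∑ i, gg i • Bv A O i := by
    have hBi : ∀ i : Fin n, gg i • Bv A O i = gg i • O + gg i • uvec A i := by
      intro i
      show gg i • (O + uvec A i) = _
      rw [smul_add]
    rw [Finset.sum_congr rfl (fun i _ => hBi i), Finset.sum_add_distrib, ← Finset.sum_smul]
    have h2 : ∑ i, gg i • uvec A i = 0 := by
      have huv : ∀ i : Fin n, gg i • uvec A i = A (i + 1) - A i := fun i =>
        (primitive_spec (edge_ne hn hinj i)).2.1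
      rw [Finset.sum_congr rfl fun i _ => huv i, hsumE]
    rw [h2, add_zero]
  have hKR : ((∑ i, gg i : ℤ) : ℝ) • toR O = ∑ i, ((gg i : ℝ)) • toR (Bv A O i) := by
    have hcast := congrArg toR hKZ
    rw [toR_smul] at hcast
    rw [hcast,
      show toR (∑ i, gg i • Bv A O i) = ∑ i, toR (gg i • Bv A O i) from
        _root_.map_sum (AddMonoidHom.mk' toR toR_add) _ _]
    exact Finset.sum_congr rfl fun i _ => toR_smul _ _
  have hfsum : ((∑ i, gg i : ℤ) : ℝ) * c₀ = ∑ i, (gg i : ℝ) * f (toR (Bv A O i)) := by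
    have happ := congrArg f hKR
    rw [_root_.map_smul, smul_eq_mul] at happ
    rw [← hc₀] at happ
    rw [happ, _root_.map_sum]
    exact Finset.sum_congr rfl fun i _ => by rw [_root_.map_smul, smul_eq_mul]
  have hallc : ∀ i, f (toR (Bv A O i)) = c₀ := by
    by_contra hne
    push_neg at hne
    obtain ⟨i₀, hi₀⟩ := hne
    have hi₀lt : f (toR (Bv A O i₀)) < c₀ := lt_of_le_of_ne (hw i₀) hi₀
    have hlt : ∑ i, (gg i : ℝ) * f (toR (Bv A O i)) < ∑ i, (gg i : ℝ) * c₀ :=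
      Finset.sum_lt_sum
        (fun i _ => mul_le_mul_of_nonneg_left (hw i) (by exact_mod_cast (hggpos i).le))
        ⟨i₀, Finset.mem_univ _, mul_lt_mul_of_pos_left hi₀lt (by exact_mod_cast hggpos i₀)⟩
    rw [← hfsum, ← Finset.sum_mul] at hlt
    have hcast2 : ((∑ i, gg i : ℤ) : ℝ) = ∑ i, (gg i : ℝ) := by push_cast; rfl
    rw [← hcast2] at hlt
    exact lt_irrefl _ hlt
  have hfx₀ : f x₀ = c₀ := by
    have hx₀C : x₀ ∈ C := interior_subset hx₀
    have hmem : f x₀ ∈ f '' C := Set.mem_image_of_mem f hx₀C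
    rw [hC, dualHull_eq,
      show f '' (convexHull ℝ (Set.range (toR ∘ Bv A O))) =
        convexHull ℝ (f '' Set.range (toR ∘ Bv A O)) from
          (f : (ℝ × ℝ) →L[ℝ] ℝ).toLinearMap.image_convexHull _] at hmem
    have himg : f '' Set.range (toR ∘ Bv A O) = {c₀} := by
      apply Set.Subset.antisymm
      · rintro y ⟨x, ⟨i, rfl⟩, rfl⟩
        exact hallc i
      · rintro y hy
        rw [Set.mem_singleton_iff] at hy
        subst hy
        exact ⟨toR (Bv A O 0), ⟨0, rfl⟩, hallc 0⟩
    rw [himg, convexHull_singleton] at hmem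
    exact hmem
  have := hf _ hx₀
  rw [hfx₀] at this
  exact lt_irrefl _ this

lemma conj1 (hn : 3 ≤ n) {A : Fin n → ℤ × ℤ} {O : ℤ × ℤ}
    (hconv : IsConvexPoly A) (hint : intPts (latticeHull A) = {O}) :
    intPts (dualHull A O) = {O} := by
  ext p
  simp only [intPts, Set.mem_setOf_eq, Set.mem_singleton_iff]
  constructor
  · intro hp
    exact dual_subset_O hn hconv hint hp
  · rintro rfl
    exact O_mem_interior_dual hn hconv hint

end MainAux5

lemma card_preimage_perm (e : Equiv.Perm (ℤ × ℤ)) (T : Set (ℤ × ℤ)) :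
    Nat.card (⇑e ⁻¹' T) = Nat.card T := by
  rw [show ⇑e ⁻¹' T = ⇑e.symm '' T from by
    rw [Equiv.image_eq_preimage_symm e.symm T, Equiv.symm_symm]]
  rw [Nat.card_coe_set_eq, Nat.card_coe_set_eq, Set.ncard_image_of_injective _ e.symm.injective]

/-- For a convex lattice polygon `M` with unique interior lattice point `O`, the point
`O` is also the unique interior lattice point of the dual `M*`; the dual of `M*` is a
point reflection of `M` (suitably translated), and in particular `m** = m`. -/
theorem stmt_16 (n : ℕ) [NeZero n] (hn : 3 ≤ n) (A : Fin n → ℤ × ℤ) (O : ℤ × ℤ)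
    (hconv : IsConvexPoly A) (hint : intPts (latticeHull A) = {O}) :
    intPts (dualHull A O) = {O} ∧
    (∃ c : ℤ × ℤ,
      dualHull (fun i : Fin n => O + primitive (A (i + 1) - A i)) O =
        (fun x : ℝ × ℝ => toR c - x) '' latticeHull A) ∧
    Nat.card (bdryPts (dualHull (fun i : Fin n => O + primitive (A (i + 1) - A i)) O)) =
      Nat.card (bdryPts (latticeHull A)) := by
  refine ⟨conj1 hn hconv hint, ⟨O + O, conj2 hn hconv hint⟩, ?_⟩
  rw [conj2 hn hconv hint]
  set c := O + O with hc
  let φ : ℝ × ℝ ≃ₜ ℝ × ℝ := (Homeomorph.neg (ℝ × ℝ)).trans (Homeomorph.addLeft (toR c))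
  have hφ : ⇑φ = fun x : ℝ × ℝ => toR c - x := by
    funext x
    show toR c + (-x) = toR c - x
    abel
  have hfr : frontier ((fun x : ℝ × ℝ => toR c - x) '' latticeHull A) =
      (fun x : ℝ × ℝ => toR c - x) '' frontier (latticeHull A) := by
    rw [← hφ, Homeomorph.image_frontier]
  have hbd : bdryPts ((fun x : ℝ × ℝ => toR c - x) '' latticeHull A) =
      (fun p : ℤ × ℤ => c - p) ⁻¹' bdryPts (latticeHull A) := by
    ext p
    simp only [bdryPts, Set.mem_setOf_eq, Set.mem_preimage]
    rw [hfr]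
    constructor
    · rintro ⟨y, hy, hyeq⟩
      have hyval : toR (c - p) = y := by
        rw [toR_sub, ← hyeq]
        exact sub_sub_cancel _ _
      rwa [hyval]
    · intro h
      exact ⟨toR (c - p), h, by
        show toR c - toR (c - p) = toR p
        rw [toR_sub]
        exact sub_sub_cancel _ _⟩
  rw [hbd]
  have hinvZ : Function.Involutive (fun p : ℤ × ℤ => c - p) := fun p => sub_sub_cancel c p
  exact card_preimage_perm hinvZ.toPerm _
end

section
/- Let M be a convex lattice polygon with exactly one interior lattice point O and m boundary lattice points. Then the dual polygon M* is convex and the vertices of M* (the primitive vectors of the edge directions of M, based at O) are pairwise distinct and occur in the same cyclic order as the corresponding edges of M. -/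
open Set MeasureTheory

lemma cross_def' (u v : ℤ × ℤ) : cross u v = u.1 * v.2 - u.2 * v.1 := rfl

lemma prim_spec (v : ℤ × ℤ) (hv : v ≠ 0) :
    ∃ g : ℤ, 0 < g ∧ v.1 = g * (primitive v).1 ∧ v.2 = g * (primitive v).2 ∧
      Int.gcd (primitive v).1 (primitive v).2 = 1 := by
  have h0 : v.1 ≠ 0 ∨ v.2 ≠ 0 := by
    by_contra h; push_neg at h; exact hv (Prod.ext h.1 h.2)
  have hg : 0 < Int.gcd v.1 v.2 := Int.gcd_pos_iff.mpr h0
  refine ⟨(Int.gcd v.1 v.2 : ℤ), by exact_mod_cast hg, ?_, ?_, ?_⟩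
  · exact (Int.mul_ediv_cancel' (Int.gcd_dvd_left _ _)).symm
  · exact (Int.mul_ediv_cancel' (Int.gcd_dvd_right _ _)).symm
  · exact Int.gcd_div_gcd_div_gcd hg

lemma parallel_of_cross (p d : ℤ × ℤ) (hp : Int.gcd p.1 p.2 = 1) (h : cross p d = 0) :
    ∃ μ : ℤ, d.1 = μ * p.1 ∧ d.2 = μ * p.2 := by
  obtain ⟨u, v, huv⟩ := Int.isCoprime_iff_gcd_eq_one.mpr hp
  rw [cross_def'] at h
  exact ⟨u * d.1 + v * d.2,
    by linear_combination -d.1 * huv - v * h,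
    by linear_combination -d.2 * huv + u * h⟩

lemma cross_smul_left_s18 {g : ℤ} {u p : ℤ × ℤ} (v : ℤ × ℤ)
    (h1 : u.1 = g * p.1) (h2 : u.2 = g * p.2) : cross u v = g * cross p v := by
  rw [cross_def', cross_def', h1, h2]; ring

lemma cross_smul_right {μ : ℤ} {u p d : ℤ × ℤ}
    (h1 : d.1 = μ * p.1) (h2 : d.2 = μ * p.2) : cross u d = μ * cross u p := by
  rw [cross_def', cross_def', h1, h2]; ring

lemma le_on_hull {s : Set (ℝ × ℝ)} (hs : Convex ℝ s) (f : (ℝ × ℝ) →L[ℝ] ℝ) {o : ℝ × ℝ} {c : ℝ}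
    (ho : o ∈ interior s) (hflt : ∀ y ∈ interior s, f y < c) {x : ℝ × ℝ} (hx : x ∈ s) :
    f x ≤ c := by
  by_contra hcon
  push_neg at hcon
  set D := f x - c with hD
  set B := |f x - f o| with hB
  have hD0 : 0 < D := by simp only [hD]; linarith
  have hB0 : 0 ≤ B := abs_nonneg _
  have hden : 0 < D + B + 1 := by linarith
  set t := D / (D + B + 1) with ht
  have ht0 : 0 < t := div_pos hD0 hden
  have ht1 : t < 1 := by rw [ht, div_lt_one hden]; linarith
  have hmem : t • o + (1 - t) • x ∈ interior s :=
    hs.combo_interior_self_mem_interior ho hx ht0 (by linarith) (by ring)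
  have hlt := hflt _ hmem
  rw [map_add, f.map_smul, f.map_smul, smul_eq_mul, smul_eq_mul] at hlt
  have htB : t * (D + B + 1) = D := by rw [ht]; field_simp
  have h1 : f x - f o ≤ B := le_abs_self _
  nlinarith [mul_le_mul_of_nonneg_left h1 ht0.le, mul_pos ht0 hD0]

lemma real_key (a b p0 q0 p1 q1 p2 q2 pk qk po qo : ℝ)
    (heq : a * p1 + b * q1 = a * p0 + b * q0)
    (h2 : a * p2 + b * q2 ≤ a * p0 + b * q0)
    (hk : a * pk + b * qk ≤ a * p0 + b * q0)
    (hO : a * po + b * qo < a * p0 + b * q0)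
    (hcr : 0 < (p1 - p0) * (q2 - q1) - (q1 - q0) * (p2 - p1)) :
    0 ≤ (p1 - p0) * (qk - q0) - (q1 - q0) * (pk - p0) := by
  have key0 : a * (p1 - p0) + b * (q1 - q0) = 0 := by linarith
  have hE : 0 < (p1 - p0) ^ 2 + (q1 - q0) ^ 2 := by
    by_contra h
    push_neg at h
    have e1 : p1 - p0 = 0 := by nlinarith [sq_nonneg (p1 - p0), sq_nonneg (q1 - q0)]
    have e2 : q1 - q0 = 0 := by nlinarith [sq_nonneg (p1 - p0), sq_nonneg (q1 - q0)]
    rw [e1, e2] at hcr; norm_num at hcr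
  set c0 := (b * (p1 - p0) - a * (q1 - q0)) / ((p1 - p0) ^ 2 + (q1 - q0) ^ 2) with hc0
  have ha : a = -c0 * (q1 - q0) := by
    rw [hc0]; field_simp; linear_combination (p1 - p0) * key0
  have hb : b = c0 * (p1 - p0) := by
    rw [hc0]; field_simp; linear_combination (q1 - q0) * key0
  have hupos : 0 < (p1 - p0) * (q2 - q0) - (q1 - q0) * (p2 - p0) := by
    have hid : (p1 - p0) * (q2 - q0) - (q1 - q0) * (p2 - p0)
        = (p1 - p0) * (q2 - q1) - (q1 - q0) * (p2 - p1) := by ring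
    rw [hid]; exact hcr
  have hu : c0 * ((p1 - p0) * (q2 - q0) - (q1 - q0) * (p2 - p0)) ≤ 0 := by
    have e : c0 * ((p1 - p0) * (q2 - q0) - (q1 - q0) * (p2 - p0))
        = (a * p2 + b * q2) - (a * p0 + b * q0) := by rw [ha, hb]; ring
    linarith [e.le, e.ge, h2]
  have hc0le : c0 ≤ 0 := by nlinarith [hu, hupos]
  have hW : c0 * ((p1 - p0) * (qo - q0) - (q1 - q0) * (po - p0)) < 0 := by
    have e : c0 * ((p1 - p0) * (qo - q0) - (q1 - q0) * (po - p0))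
        = (a * po + b * qo) - (a * p0 + b * q0) := by rw [ha, hb]; ring
    linarith [e.le, e.ge, hO]
  have hc0ne : c0 ≠ 0 := by intro h; rw [h] at hW; norm_num at hW
  have hc0neg : c0 < 0 := lt_of_le_of_ne hc0le hc0ne
  have hk' : c0 * ((p1 - p0) * (qk - q0) - (q1 - q0) * (pk - p0)) ≤ 0 := by
    have e : c0 * ((p1 - p0) * (qk - q0) - (q1 - q0) * (pk - p0))
        = (a * pk + b * qk) - (a * p0 + b * q0) := by rw [ha, hb]; ring
    linarith [e.le, e.ge, hk]
  nlinarith [hk', hc0neg]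

lemma support {n : ℕ} [NeZero n] (A : Fin n → ℤ × ℤ) (O : ℤ × ℤ)
    (hconv : IsConvexPoly A) (hint : intPts (latticeHull A) = {O}) (i k : Fin n) :
    0 ≤ cross (A (i + 1) - A i) (A k - A i) := by
  obtain ⟨hinj, hcr, hfr⟩ := hconv
  have hcvx : Convex ℝ (latticeHull A) := convex_convexHull ℝ _
  have hO : toR O ∈ interior (latticeHull A) := by
    have : O ∈ intPts (latticeHull A) := by rw [hint]; rfl
    exact this
  have hm : midpoint ℝ (toR (A i)) (toR (A (i + 1))) ∈ frontier (latticeHull A) :=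
    hfr i (midpoint_mem_segment _ _)
  have hmni : midpoint ℝ (toR (A i)) (toR (A (i + 1))) ∉ interior (latticeHull A) := hm.2
  obtain ⟨f, hf⟩ := geometric_hahn_banach_open_point hcvx.interior isOpen_interior hmni
  set c : ℝ := f (midpoint ℝ (toR (A i)) (toR (A (i + 1)))) with hc
  have hle : ∀ x ∈ latticeHull A, f x ≤ c := fun x hx => le_on_hull hcvx f hO hf hx
  have hvert : ∀ j : Fin n, f (toR (A j)) ≤ c := fun j =>
    hle _ (subset_convexHull ℝ _ ⟨j, rfl⟩)
  have hmid : c = (f (toR (A i)) + f (toR (A (i + 1)))) / 2 := by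
    rw [hc, midpoint_eq_smul_add, f.map_smul, map_add, smul_eq_mul, invOf_eq_inv]; ring
  have hx0 : f (toR (A i)) = c := by
    have h1 := hvert i; have h2 := hvert (i + 1); linarith
  have hx1 : f (toR (A (i + 1))) = c := by
    have h1 := hvert i; have h2 := hvert (i + 1); linarith
  have hrep : ∀ p : ℝ × ℝ, f p = f (1, 0) * p.1 + f (0, 1) * p.2 := by
    intro p
    have h : p = p.1 • ((1 : ℝ), (0 : ℝ)) + p.2 • ((0 : ℝ), (1 : ℝ)) := by ext <;> simp
    calc f p = f (p.1 • ((1 : ℝ), (0 : ℝ)) + p.2 • ((0 : ℝ), (1 : ℝ))) := by rw [← h]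
    _ = f (1, 0) * p.1 + f (0, 1) * p.2 := by
        rw [map_add, f.map_smul, f.map_smul, smul_eq_mul, smul_eq_mul]; ring
  set a := f ((1 : ℝ), (0 : ℝ))
  set b := f ((0 : ℝ), (1 : ℝ))
  have hco : ∀ j : Fin n, f (toR (A j)) = a * ((A j).1 : ℝ) + b * ((A j).2 : ℝ) := fun j =>
    hrep (toR (A j))
  have hcoO : f (toR O) = a * (O.1 : ℝ) + b * (O.2 : ℝ) := hrep (toR O)
  have heq : a * ((A (i + 1)).1 : ℝ) + b * ((A (i + 1)).2 : ℝ)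
      = a * ((A i).1 : ℝ) + b * ((A i).2 : ℝ) := by
    rw [← hco, ← hco, hx0, hx1]
  have h2 : a * ((A (i + 2)).1 : ℝ) + b * ((A (i + 2)).2 : ℝ)
      ≤ a * ((A i).1 : ℝ) + b * ((A i).2 : ℝ) := by
    rw [← hco, ← hco, hx0]; exact hvert _
  have hk : a * ((A k).1 : ℝ) + b * ((A k).2 : ℝ)
      ≤ a * ((A i).1 : ℝ) + b * ((A i).2 : ℝ) := by
    rw [← hco, ← hco, hx0]; exact hvert _
  have hOs : a * (O.1 : ℝ) + b * (O.2 : ℝ)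
      < a * ((A i).1 : ℝ) + b * ((A i).2 : ℝ) := by
    rw [← hcoO, ← hco, hx0]; exact hf _ hO
  have hcrR : (0 : ℝ) < (((A (i + 1)).1 : ℝ) - ((A i).1 : ℝ)) * (((A (i + 2)).2 : ℝ) - ((A (i + 1)).2 : ℝ))
      - (((A (i + 1)).2 : ℝ) - ((A i).2 : ℝ)) * (((A (i + 2)).1 : ℝ) - ((A (i + 1)).1 : ℝ)) := by
    have h := hcr i
    rw [cross_def'] at h
    simp only [Prod.fst_sub, Prod.snd_sub] at h
    exact_mod_cast h
  have hgoal := real_key a b ((A i).1 : ℝ) ((A i).2 : ℝ) ((A (i + 1)).1 : ℝ) ((A (i + 1)).2 : ℝ)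
    ((A (i + 2)).1 : ℝ) ((A (i + 2)).2 : ℝ) ((A k).1 : ℝ) ((A k).2 : ℝ) (O.1 : ℝ) (O.2 : ℝ)
    heq h2 hk hOs hcrR
  rw [cross_def']
  simp only [Prod.fst_sub, Prod.snd_sub]
  exact_mod_cast hgoal

set_option maxHeartbeats 1000000 in
/-- The dual polygon of a convex lattice polygon with unique interior lattice point `O`
is convex, and its vertices (the primitive edge-direction vectors based at `O`) are
pairwise distinct and occur in the same (counterclockwise) cyclic order around `O` as the
corresponding edges. -/
theorem stmt_18 (n : ℕ) [NeZero n] (hn : 3 ≤ n) (A : Fin n → ℤ × ℤ) (O : ℤ × ℤ)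
    (hconv : IsConvexPoly A) (hint : intPts (latticeHull A) = {O}) :
    Convex ℝ (dualHull A O) ∧
    Function.Injective (fun i : Fin n => O + primitive (A (i + 1) - A i)) ∧
    ∀ i : Fin n, 0 < cross (primitive (A (i + 1) - A i)) (primitive (A (i + 2) - A (i + 1))) := by
  have hinj := hconv.1
  have hcr := hconv.2.1
  have hne : ∀ i : Fin n, A (i + 1) - A i ≠ 0 := by
    intro i h0
    have h := hcr i
    rw [h0, cross_def'] at h
    simp at h
  refine ⟨convex_convexHull ℝ _, ?_, ?_⟩
  · -- injectivity
    intro i j hij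
    have hp : primitive (A (i + 1) - A i) = primitive (A (j + 1) - A j) := by
      have : O + primitive (A (i + 1) - A i) = O + primitive (A (j + 1) - A j) := hij
      exact add_left_cancel this
    obtain ⟨gi, hgi, hi1, hi2, hgcd⟩ := prim_spec _ (hne i)
    obtain ⟨gj, hgj, hj1, hj2, _⟩ := prim_spec _ (hne j)
    set p := primitive (A (i + 1) - A i) with hpdef
    rw [← hp] at hj1 hj2
    -- cross p (A j - A i) = 0
    have s1 := support A O hconv hint i j
    have s2 := support A O hconv hint j i
    rw [cross_smul_left_s18 _ hi1 hi2] at s1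
    rw [cross_smul_left_s18 _ hj1 hj2] at s2
    have hd1 : 0 ≤ cross p (A j - A i) := by nlinarith
    have hanti : cross p (A i - A j) = - cross p (A j - A i) := by
      rw [cross_def', cross_def']
      simp only [Prod.fst_sub, Prod.snd_sub]; ring
    have hd2 : cross p (A j - A i) ≤ 0 := by
      rw [hanti] at s2; nlinarith
    obtain ⟨μ, hm1, hm2⟩ := parallel_of_cross p _ hgcd (le_antisymm hd2 hd1)
    -- index arithmetic
    have idx1 : (i - 1) + 1 = i := by open Fin.CommRing in ring
    have idx2 : (i - 1) + 2 = i + 1 := by open Fin.CommRing in ring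
    have idx3 : (j - 1) + 1 = j := by open Fin.CommRing in ring
    have idx4 : (j - 1) + 2 = j + 1 := by open Fin.CommRing in ring
    -- μ ≥ 0
    have s3 := support A O hconv hint (i - 1) j
    rw [idx1] at s3
    have hsplit : cross (A i - A (i - 1)) (A j - A (i - 1))
        = cross (A i - A (i - 1)) (A j - A i) := by
      rw [cross_def', cross_def']
      simp only [Prod.fst_sub, Prod.snd_sub]; ring
    rw [hsplit, cross_smul_right hm1 hm2] at s3
    have hq := hcr (i - 1)
    rw [idx1, idx2, cross_smul_right hi1 hi2] at hq
    have hqp : 0 < cross (A i - A (i - 1)) p := by nlinarith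
    have hmu1 : 0 ≤ μ := by nlinarith
    -- μ ≤ 0
    have s4 := support A O hconv hint (j - 1) i
    rw [idx3] at s4
    have hsplit2 : cross (A j - A (j - 1)) (A i - A (j - 1))
        = cross (A j - A (j - 1)) (A i - A j) := by
      rw [cross_def', cross_def']
      simp only [Prod.fst_sub, Prod.snd_sub]; ring
    have hm1' : (A i - A j).1 = (-μ) * p.1 := by
      simp only [Prod.fst_sub] at hm1 ⊢; linarith
    have hm2' : (A i - A j).2 = (-μ) * p.2 := by
      simp only [Prod.snd_sub] at hm2 ⊢; linarith
    rw [hsplit2, cross_smul_right hm1' hm2'] at s4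
    have hr := hcr (j - 1)
    rw [idx3, idx4, cross_smul_right hj1 hj2] at hr
    have hrp : 0 < cross (A j - A (j - 1)) p := by nlinarith
    have hmu2 : μ ≤ 0 := by nlinarith
    have hmu : μ = 0 := le_antisymm hmu2 hmu1
    have hzero : A j - A i = 0 := by
      rw [hmu] at hm1 hm2
      simp only [zero_mul] at hm1 hm2
      exact Prod.ext hm1 hm2
    have : A j = A i := by
      have := sub_eq_zero.mp hzero; exact this
    exact (hinj this).symm
  · -- cyclic order
    intro i
    obtain ⟨g1, hg1, h11, h12, _⟩ := prim_spec _ (hne i)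
    obtain ⟨g2, hg2, h21, h22, _⟩ := prim_spec _ (hne (i + 1))
    have h := hcr i
    have hidx : A (i + 1 + 1) - A (i + 1) = A (i + 2) - A (i + 1) := by
      open Fin.CommRing in norm_num [add_assoc, one_add_one_eq_two]
    rw [hidx] at h21 h22
    have key : cross (A (i + 1) - A i) (A (i + 2) - A (i + 1))
        = g1 * g2 * cross (primitive (A (i + 1) - A i)) (primitive (A (i + 1 + 1) - A (i + 1))) := by
      rw [cross_def', cross_def', h11, h12, h21, h22, hidx]; ring
    rw [key] at h
    have hidx2 : primitive (A (i + 1 + 1) - A (i + 1)) = primitive (A (i + 2) - A (i + 1)) := by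
      rw [hidx]
    rw [hidx2] at h
    nlinarith [mul_pos hg1 hg2, h]
end
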